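/- arXiv:2402.11642 — 3 statements merged into one kernel-verified Lean document; each statement's English description precedes it below -/
import Mathlib

section
/- Let d ≥ 1. Let u ∈ C¹(ℝ^d;ℝ^d) have bounded derivative and be divergence-free (∇·u(x) = 0 for all x), let ρ ∈ C_c(ℝ^d;ℝ), and let K ∈ 𝒮(ℝ^d;ℝ). Then for every x ∈ ℝ^d: u(x)·(ρ*∇K)(x) − Σ_{i=1}^d ((u_i ρ)*∂_i K)(x) = ∫_{ℝ^d} ρ(y) (u(x) − u(y))·∇K(x−y) dy = Σ_{i,j=1}^d ∫_{ℝ^d} ρ(x−h) (∫₀¹ ∂u_i/∂x_j(x−th) dt) ∂(h_j K)/∂h_i(h) dh. -/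
open MeasureTheory Filter
open scoped ENNReal FourierTransform SchwartzMap

noncomputable section

/-- `ℝ^d`. -/
abbrev Eu (d : ℕ) := EuclideanSpace ℝ (Fin d)

/-- Rescaled mollifier `φ_δ(x) = δ^{-d} φ(x/δ)`. -/
def moll {d : ℕ} (φ : Eu d → ℝ) (δ : ℝ) (x : Eu d) : ℝ := (δ ^ d)⁻¹ * φ (δ⁻¹ • x)

/-- Convolution of scalar functions on `ℝ^d`. -/
def cnv {d : ℕ} (f g : Eu d → ℝ) (x : Eu d) : ℝ := ∫ y, f y * g (x - y)

/-- `i`-th partial derivative. -/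
def pd {d : ℕ} (f : Eu d → ℝ) (i : Fin d) (x : Eu d) : ℝ :=
  fderiv ℝ f x (EuclideanSpace.single i 1)

/-- Smooth compactly supported test functions. -/
def IsTest {d : ℕ} (φ : Eu d → ℝ) : Prop := ContDiff ℝ (⊤ : ℕ∞) φ ∧ HasCompactSupport φ

/-- Divergence free in the weak sense: `∫ u·∇φ = 0` for all test functions `φ`. -/
def DivFree {d : ℕ} (u : Eu d → Eu d) : Prop :=
  ∀ φ : Eu d → ℝ, IsTest φ → ∫ x, fderiv ℝ φ x (u x) = 0

/-- `du` is the weak (distributional) gradient of `u`, componentwise: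
`∫ u_i ∂_j φ = −∫ (du)_{ij} φ` for all test functions `φ`. -/
def HasWeakGrad {d : ℕ} (u : Eu d → Eu d) (du : Eu d → (Eu d →L[ℝ] Eu d)) : Prop :=
  ∀ (i j : Fin d) (φ : Eu d → ℝ), IsTest φ →
    ∫ x, u x i * pd φ j x = - ∫ x, (du x (EuclideanSpace.single j 1)) i * φ x

/-- The commutator `R(x) = u(x)·(ρ*∇K)(x) − Σ_i ((u_i ρ)*∂_i K)(x)`. -/
def DLcomm {d : ℕ} (u : Eu d → Eu d) (ρ : Eu d → ℝ) (K : Eu d → ℝ) (x : Eu d) : ℝ :=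
  (∑ i, u x i * ∫ y, ρ y * pd K i (x - y)) -
    ∑ i, ∫ y, (u y i * ρ y) * pd K i (x - y)

section AuxCommutator

variable {d : ℕ}

lemma eu_sum_single' (h : Eu d) : ∑ j, h j • EuclideanSpace.single j (1:ℝ) = h := by
  have := (EuclideanSpace.basisFun (Fin d) ℝ).sum_repr h
  simpa [EuclideanSpace.basisFun_repr, EuclideanSpace.basisFun_apply] using this

lemma clm_apply_coord' (L : Eu d →L[ℝ] Eu d) (h : Eu d) (i : Fin d) :
    L h i = ∑ j, h j * L (EuclideanSpace.single j 1) i := by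
  conv_lhs => rw [← eu_sum_single' h]
  rw [map_sum]
  induction (Finset.univ : Finset (Fin d)) using Finset.induction with
  | empty => simp
  | @insert a s hnot ih =>
    rw [Finset.sum_insert hnot, Finset.sum_insert hnot, ← ih]
    simp

lemma pd_cont' (K : 𝓢(Eu d, ℝ)) (i : Fin d) : Continuous (pd (⇑K) i) := by
  have h1 : Continuous (fderiv ℝ (⇑K)) := (K.smooth ⊤).continuous_fderiv (by simp)
  exact h1.clm_apply continuous_const

lemma line_cont' (u : Eu d → Eu d) (hu : ContDiff ℝ 1 u) (x h v : Eu d) (i : Fin d) :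
    Continuous fun t : ℝ => fderiv ℝ u (x - t • h) v i := by
  have h1 : Continuous (fderiv ℝ u) := hu.continuous_fderiv one_ne_zero
  have h2 : Continuous fun t : ℝ => x - t • h :=
    continuous_const.sub (continuous_id.smul continuous_const)
  have h3 : Continuous fun t : ℝ => fderiv ℝ u (x - t • h) v :=
    (h1.comp h2).clm_apply continuous_const
  exact (EuclideanSpace.proj (𝕜 := ℝ) i).continuous.comp h3

lemma ftc_line' (u : Eu d → Eu d) (hu : ContDiff ℝ 1 u) (x h : Eu d) (i : Fin d) :
    u x i - u (x - h) i = ∫ t in (0:ℝ)..1, fderiv ℝ u (x - t • h) h i := by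
  have key : ∀ t ∈ Set.uIcc (0:ℝ) 1,
      HasDerivAt (fun s : ℝ => u (x - s • h) i) (-(fderiv ℝ u (x - t • h) h i)) t := by
    intro t _
    have hc : HasDerivAt (fun s : ℝ => x - s • h) (-h) t := by
      simpa using ((hasDerivAt_id t).smul_const h).const_sub x
    have hf : HasFDerivAt u (fderiv ℝ u (x - t • h)) (x - t • h) :=
      (hu.differentiable one_ne_zero (x - t • h)).hasFDerivAt
    have h4 := hf.comp_hasDerivAt t hc
    have h5 := (EuclideanSpace.proj (𝕜 := ℝ) i).hasFDerivAt.comp_hasDerivAt t h4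
    simpa [map_neg, Function.comp_def] using h5
  have hint : IntervalIntegrable (fun t : ℝ => fderiv ℝ u (x - t • h) h i) volume 0 1 :=
    (line_cont' u hu x h h i).intervalIntegrable _ _
  have := intervalIntegral.integral_eq_sub_of_hasDerivAt key hint.neg
  rw [intervalIntegral.integral_neg] at this
  simp only [one_smul, zero_smul, sub_zero] at this
  linarith

lemma A_cont' (u : Eu d → Eu d) (hu : ContDiff ℝ 1 u) (x : Eu d) (i j : Fin d) :
    Continuous fun h : Eu d =>
      ∫ t in (0:ℝ)..1, fderiv ℝ u (x - t • h) (EuclideanSpace.single j 1) i := by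
  apply intervalIntegral.continuous_parametric_intervalIntegral_of_continuous' (μ := volume)
  have h1 : Continuous (fderiv ℝ u) := hu.continuous_fderiv one_ne_zero
  have h2 : Continuous fun p : Eu d × ℝ => x - p.2 • p.1 :=
    continuous_const.sub (continuous_snd.smul continuous_fst)
  have h3 : Continuous fun p : Eu d × ℝ =>
      fderiv ℝ u (x - p.2 • p.1) (EuclideanSpace.single j 1) :=
    (h1.comp h2).clm_apply continuous_const
  exact (EuclideanSpace.proj (𝕜 := ℝ) i).continuous.comp h3

end AuxCommutator

/-- **Commutator identities** (from the proof of Lemma `thm:calderon`): for `u ∈ C¹` with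
bounded derivative and pointwise divergence-free, `ρ ∈ C_c`, and Schwartz `K`,
`u(x)·(ρ*∇K)(x) − Σ_i ((u_i ρ)*∂_i K)(x) = ∫ ρ(y)(u(x)−u(y))·∇K(x−y) dy
 = Σ_{i,j} ∫ ρ(x−h) (∫₀¹ ∂u_i/∂x_j(x−th) dt) ∂(h_j K)/∂h_i(h) dh`. -/
theorem commutator_pointwise_identities
    (d : ℕ) (hd : 1 ≤ d)
    (u : Eu d → Eu d) (hu : ContDiff ℝ 1 u)
    (hub : ∃ M : ℝ, ∀ x : Eu d, ‖fderiv ℝ u x‖ ≤ M)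
    (hdiv : ∀ x : Eu d, (∑ i : Fin d, fderiv ℝ u x (EuclideanSpace.single i 1) i) = 0)
    (ρ : Eu d → ℝ) (hρc : Continuous ρ) (hρs : HasCompactSupport ρ)
    (K : 𝓢(Eu d, ℝ)) (x : Eu d) :
    DLcomm u ρ (⇑K) x
        = ∫ y, ρ y * ∑ i : Fin d, (u x i - u y i) * pd (⇑K) i (x - y) ∧
    DLcomm u ρ (⇑K) x
        = ∑ i : Fin d, ∑ j : Fin d,
            ∫ h, ρ (x - h) *
              (∫ t in (0:ℝ)..1, fderiv ℝ u (x - t • h) (EuclideanSpace.single j 1) i) *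
              fderiv ℝ (fun h' : Eu d => h' j * K h') h (EuclideanSpace.single i 1) := by
  -- notation
  set P : Fin d → Eu d → ℝ := fun i => pd (⇑K) i with hPdef
  set A : Fin d → Fin d → Eu d → ℝ := fun i j h =>
    ∫ t in (0:ℝ)..1, fderiv ℝ u (x - t • h) (EuclideanSpace.single j 1) i with hAdef
  have hPc : ∀ i, Continuous (P i) := fun i => pd_cont' K i
  have hKc : Continuous (⇑K) := K.continuous
  have huc : Continuous u := hu.continuous
  have hui : ∀ i, Continuous fun y => u y i := fun i =>
    (EuclideanSpace.proj (𝕜 := ℝ) i).continuous.comp huc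
  have hAc : ∀ i j, Continuous (A i j) := fun i j => A_cont' u hu x i j
  -- generic integrability against ρ
  have hInt : ∀ g : Eu d → ℝ, Continuous g → Integrable fun y => ρ y * g y := by
    intro g hg
    exact (hρc.mul hg).integrable_of_hasCompactSupport hρs.mul_right
  have hρc2 : Continuous fun h : Eu d => ρ (x - h) :=
    hρc.comp (continuous_const.sub continuous_id)
  have hρs2 : HasCompactSupport fun h : Eu d => ρ (x - h) :=
    hρs.comp_homeomorph (Homeomorph.subLeft x)
  have hInt2 : ∀ g : Eu d → ℝ, Continuous g → Integrable fun h => ρ (x - h) * g h := by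
    intro g hg
    exact (hρc2.mul hg).integrable_of_hasCompactSupport hρs2.mul_right
  -- first identity
  have first : DLcomm u ρ (⇑K) x
      = ∫ y, ρ y * ∑ i : Fin d, (u x i - u y i) * P i (x - y) := by
    have e0 : ∀ y : Eu d, ρ y * ∑ i : Fin d, (u x i - u y i) * P i (x - y)
        = ∑ i : Fin d, (u x i * (ρ y * P i (x - y)) - (u y i * ρ y) * P i (x - y)) := by
      intro y
      rw [Finset.mul_sum]
      exact Finset.sum_congr rfl fun i _ => by ring
    have hI1 : ∀ i : Fin d, Integrable fun y => ρ y * P i (x - y) := fun i =>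
      hInt _ ((hPc i).comp (continuous_const.sub continuous_id))
    have hI2 : ∀ i : Fin d, Integrable fun y => (u y i * ρ y) * P i (x - y) := by
      intro i
      have hc : Continuous fun y => (u y i * ρ y) * P i (x - y) :=
        ((hui i).mul hρc).mul ((hPc i).comp (continuous_const.sub continuous_id))
      exact hc.integrable_of_hasCompactSupport (hρs.mul_left.mul_right)
    calc DLcomm u ρ (⇑K) x
        = ∑ i : Fin d, (u x i * ∫ y, ρ y * P i (x - y))
            - ∑ i : Fin d, ∫ y, (u y i * ρ y) * P i (x - y) := rfl
      _ = ∑ i : Fin d, ((u x i * ∫ y, ρ y * P i (x - y))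
            - ∫ y, (u y i * ρ y) * P i (x - y)) := by
          rw [Finset.sum_sub_distrib]
      _ = ∑ i : Fin d, ∫ y, (u x i * (ρ y * P i (x - y)) - (u y i * ρ y) * P i (x - y)) := by
          refine Finset.sum_congr rfl fun i _ => ?_
          rw [integral_sub ((hI1 i).const_mul _) (hI2 i), integral_const_mul]
      _ = ∫ y, ∑ i : Fin d, (u x i * (ρ y * P i (x - y)) - (u y i * ρ y) * P i (x - y)) := by
          refine (integral_finset_sum _ fun i _ => ?_).symm
          exact ((hI1 i).const_mul _).sub (hI2 i)
      _ = ∫ y, ρ y * ∑ i : Fin d, (u x i - u y i) * P i (x - y) := by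
          exact integral_congr_ae (Eventually.of_forall fun y => (e0 y).symm)
  refine ⟨first, ?_⟩
  -- the fderiv of h' ↦ h'_j K h'
  have hD : ∀ (i j : Fin d) (h : Eu d),
      fderiv ℝ (fun h' : Eu d => h' j * K h') h (EuclideanSpace.single i 1)
        = (if j = i then K h else 0) + h j * P i h := by
    intro i j h
    have h1 : HasFDerivAt (fun h' : Eu d => h' j)
        (EuclideanSpace.proj (𝕜 := ℝ) j : Eu d →L[ℝ] ℝ) h :=
      (EuclideanSpace.proj (𝕜 := ℝ) j).hasFDerivAt
    have h2 : HasFDerivAt (⇑K) (fderiv ℝ (⇑K) h) h :=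
      (((K.smooth 1).differentiable (by simp)) h).hasFDerivAt
    have h3 : HasFDerivAt (fun h' : Eu d => h' j * K h') _ h := h1.mul h2
    rw [h3.fderiv]
    have hproj : (EuclideanSpace.proj (𝕜 := ℝ) j) (EuclideanSpace.single i (1:ℝ))
        = if j = i then 1 else 0 := by
      simp [EuclideanSpace.single_apply]
    simp only [ContinuousLinearMap.add_apply, ContinuousLinearMap.smul_apply, smul_eq_mul, hproj]
    rcases eq_or_ne j i with hij | hij <;>
      simp [hij, hPdef, pd] <;> try ring
  -- trace of A vanishes
  have htrace : ∀ h : Eu d, ∑ i : Fin d, A i i h = 0 := by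
    intro h
    have : ∑ i : Fin d, A i i h
        = ∫ t in (0:ℝ)..1, ∑ i : Fin d,
            fderiv ℝ u (x - t • h) (EuclideanSpace.single i 1) i := by
      exact (intervalIntegral.integral_finset_sum fun i _ =>
        (line_cont' u hu x h _ i).intervalIntegrable _ _).symm
    rw [this]
    simp [hdiv]
  -- FTC: Σ_j h_j A i j h = u x i - u (x - h) i
  have hftc : ∀ (i : Fin d) (h : Eu d), ∑ j, h j * A i j h = u x i - u (x - h) i := by
    intro i h
    rw [ftc_line' u hu x h i]
    have e1 : ∀ t : ℝ, fderiv ℝ u (x - t • h) h i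
        = ∑ j, h j * fderiv ℝ u (x - t • h) (EuclideanSpace.single j 1) i := fun t =>
      clm_apply_coord' _ h i
    rw [intervalIntegral.integral_congr (g := fun t => ∑ j, h j *
      fderiv ℝ u (x - t • h) (EuclideanSpace.single j 1) i) (fun t _ => e1 t)]
    rw [intervalIntegral.integral_finset_sum (f := fun j t => h j *
      fderiv ℝ u (x - t • h) (EuclideanSpace.single j 1) i) fun j _ =>
      (continuous_const.mul (line_cont' u hu x h _ i)).intervalIntegrable _ _]
    exact Finset.sum_congr rfl fun j _ => by
      rw [intervalIntegral.integral_const_mul]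
  -- pointwise identity for the double-sum integrand
  have hpt : ∀ h : Eu d,
      ∑ i : Fin d, ∑ j : Fin d, ρ (x - h) * A i j h *
          fderiv ℝ (fun h' : Eu d => h' j * K h') h (EuclideanSpace.single i 1)
        = ρ (x - h) * ∑ i : Fin d, (u x i - u (x - h) i) * P i h := by
    intro h
    have e2 : ∀ i j : Fin d, ρ (x - h) * A i j h *
          fderiv ℝ (fun h' : Eu d => h' j * K h') h (EuclideanSpace.single i 1)
        = (if j = i then ρ (x - h) * A i j h * K h else 0)
          + ρ (x - h) * (A i j h * (h j * P i h)) := by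
      intro i j
      rw [hD i j h]
      rcases eq_or_ne j i with hij | hij <;>
        simp [hij] <;> try ring
    simp_rw [e2, Finset.sum_add_distrib, Finset.sum_ite_eq' Finset.univ,
      Finset.mem_univ, if_true]
    have e3 : ∑ i : Fin d, ρ (x - h) * A i i h * K h
        = ρ (x - h) * K h * ∑ i : Fin d, A i i h := by
      rw [Finset.mul_sum]
      exact Finset.sum_congr rfl fun i _ => by ring
    rw [e3, htrace h, mul_zero, zero_add, Finset.mul_sum]
    refine Finset.sum_congr rfl fun i _ => ?_
    have e4 : ∑ j : Fin d, ρ (x - h) * (A i j h * (h j * P i h))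
        = ρ (x - h) * ((∑ j, h j * A i j h) * P i h) := by
      rw [Finset.sum_mul, Finset.mul_sum]
      exact Finset.sum_congr rfl fun j _ => by ring
    rw [e4]
    try rw [hftc i h]
    try ring
  -- integrability of each double-sum term
  have hIij : ∀ i j : Fin d, Integrable fun h => ρ (x - h) * A i j h *
      fderiv ℝ (fun h' : Eu d => h' j * K h') h (EuclideanSpace.single i 1) := by
    intro i j
    have hDc : Continuous fun h : Eu d =>
        fderiv ℝ (fun h' : Eu d => h' j * K h') h (EuclideanSpace.single i 1) := by
      have : (fun h : Eu d =>
          fderiv ℝ (fun h' : Eu d => h' j * K h') h (EuclideanSpace.single i 1))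
          = fun h => (if j = i then K h else 0) + h j * P i h := funext fun h => hD i j h
      rw [this]
      apply Continuous.add
      · rcases eq_or_ne j i with hij | hij
        · simpa only [hij, if_pos rfl, if_true] using hKc
        · simp only [if_neg hij]
          exact continuous_const
      · exact ((EuclideanSpace.proj (𝕜 := ℝ) j).continuous).mul (hPc i)
    have := hInt2 _ ((hAc i j).mul hDc)
    simpa [mul_assoc] using this
  -- assemble the second identity
  rw [first]
  have change : (∫ y, ρ y * ∑ i : Fin d, (u x i - u y i) * P i (x - y))
      = ∫ h, ρ (x - h) * ∑ i : Fin d, (u x i - u (x - h) i) * P i h := by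
    rw [← integral_sub_left_eq_self
      (fun y => ρ y * ∑ i : Fin d, (u x i - u y i) * P i (x - y)) volume x]
    refine integral_congr_ae (Eventually.of_forall fun h => ?_)
    simp [sub_sub_cancel]
  rw [change]
  rw [integral_congr_ae (Eventually.of_forall fun h => (hpt h).symm)]
  rw [integral_finset_sum _ fun i _ => integrable_finset_sum _ fun j _ => hIij i j]
  exact Finset.sum_congr rfl fun i _ =>
    (integral_finset_sum _ fun j _ => hIij i j)
end
end

section
/- Let d ≥ 1 and fix i, j ∈ {1,…,d}. Define m : ℝ^d → ℝ by m(ξ) = −2ξ_i ξ_j / (1 + |ξ|²). Then m is smooth, and for every natural number n there exists a constant C_n > 0 such that |ξ|^n ‖∇^n m(ξ)‖ ≤ C_n for all ξ ≠ 0, where ∇^n m denotes the n-th total (Fréchet) derivative of m and ‖·‖ its operator norm. (This is the Mikhlin multiplier condition for the symbol −ξ_i ∂/∂ξ_j log(1+|ξ|²).) -/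
open MeasureTheory Filter
open scoped ENNReal FourierTransform SchwartzMap

noncomputable section

section Aux

variable {E F' : Type*} [NormedAddCommGroup E] [NormedSpace ℝ E]
  [NormedAddCommGroup F'] [NormedSpace ℝ F']

/-- `fderiv` commutes with translation of the argument. -/
lemma fderiv_comp_add_right'' (f : E → F') (a x : E) :
    fderiv ℝ (fun y => f (y + a)) x = fderiv ℝ f (x + a) := by
  by_cases h : DifferentiableAt ℝ f (x + a)
  · have h1 : HasFDerivAt (fun y : E => y + a) (ContinuousLinearMap.id ℝ E) x :=
      (hasFDerivAt_id x).add_const a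
    have h2 := h.hasFDerivAt.comp x h1
    have h3 : HasFDerivAt (fun y => f (y + a)) (fderiv ℝ f (x + a)) x := by
      simpa [Function.comp_def] using h2
    exact h3.fderiv
  · rw [fderiv_zero_of_not_differentiableAt h, fderiv_zero_of_not_differentiableAt]
    intro hc
    apply h
    have h4 : DifferentiableAt ℝ (fun z : E => z + (-a)) (x + a) :=
      differentiableAt_id.add_const (-a)
    have h5 : DifferentiableAt ℝ (fun y => f (y + a)) ((x + a) + -a) := by
      simpa using hc
    have h6 := DifferentiableAt.comp (x + a) h5 h4
    simpa [Function.comp_def] using h6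

/-- `iteratedFDeriv` commutes with translation of the argument. -/
lemma iteratedFDeriv_comp_add_right'' (n : ℕ) (f : E → F') (a : E) :
    ∀ x, iteratedFDeriv ℝ n (fun y => f (y + a)) x = iteratedFDeriv ℝ n f (x + a) := by
  induction n with
  | zero =>
    intro x
    ext m
    simp [iteratedFDeriv_zero_apply]
  | succ n ih =>
    intro x
    ext m
    rw [iteratedFDeriv_succ_apply_left, iteratedFDeriv_succ_apply_left]
    have h1 : iteratedFDeriv ℝ n (fun y => f (y + a)) =
        fun y => iteratedFDeriv ℝ n f (y + a) := funext ih
    rw [h1, fderiv_comp_add_right'' (iteratedFDeriv ℝ n f) a x]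

end Aux

set_option maxHeartbeats 1000000 in
/-- **Mikhlin multiplier condition for the symbol `−2ξ_iξ_j/(1+|ξ|²)`**
(from the proof of Proposition `thm:propagation`): the symbol is smooth and
`|ξ|^n ‖∇^n m(ξ)‖ ≤ C_n` for every `n`. -/
theorem mikhlin_condition_log_laplacian_symbol
    (d : ℕ) (hd : 1 ≤ d) (i j : Fin d) :
    ContDiff ℝ (⊤ : ℕ∞) (fun ξ : Eu d => -2 * ξ i * ξ j / (1 + ‖ξ‖ ^ 2)) ∧
    ∀ n : ℕ, ∃ C : ℝ, 0 < C ∧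
      ∀ ξ : Eu d, ξ ≠ 0 →
        ‖ξ‖ ^ n *
          ‖iteratedFDeriv ℝ n (fun ξ : Eu d => -2 * ξ i * ξ j / (1 + ‖ξ‖ ^ 2)) ξ‖ ≤ C := by
  -- the symbol
  have hproji : ContDiff ℝ (⊤ : WithTop ℕ∞) (fun ξ : Eu d => ξ i) :=
    (EuclideanSpace.proj (𝕜 := ℝ) i).contDiff
  have hprojj : ContDiff ℝ (⊤ : WithTop ℕ∞) (fun ξ : Eu d => ξ j) :=
    (EuclideanSpace.proj (𝕜 := ℝ) j).contDiff
  have hnum : ContDiff ℝ (⊤ : WithTop ℕ∞) (fun ξ : Eu d => -2 * ξ i * ξ j) :=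
    (contDiff_const.mul hproji).mul hprojj
  have hden : ContDiff ℝ (⊤ : WithTop ℕ∞) (fun ξ : Eu d => 1 + ‖ξ‖ ^ 2) :=
    contDiff_const.add (contDiff_norm_sq ℝ)
  have hdenne : ∀ ξ : Eu d, (1 : ℝ) + ‖ξ‖ ^ 2 ≠ 0 := fun ξ => by positivity
  have hsmooth : ContDiff ℝ (⊤ : WithTop ℕ∞)
      (fun ξ : Eu d => -2 * ξ i * ξ j / (1 + ‖ξ‖ ^ 2)) :=
    hnum.div hden hdenne
  refine ⟨hsmooth.of_le le_top, fun n => ?_⟩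
  -- the homogeneous extension on `(Eu d) × ℝ`
  set Fh : (Eu d × ℝ) → ℝ := fun p => -2 * p.1 i * p.1 j / (‖p.1‖ ^ 2 + p.2 ^ 2) with hFh
  set U : Set (Eu d × ℝ) := {p | p ≠ 0} with hUdef
  have hUo : IsOpen U := isOpen_ne
  have hFsm : ContDiffOn ℝ (⊤ : WithTop ℕ∞) Fh U := by
    apply ContDiffOn.div
    · exact (((contDiff_const.mul (hproji.comp contDiff_fst)).mul
        (hprojj.comp contDiff_fst))).contDiffOn
    · exact (((contDiff_norm_sq ℝ).comp contDiff_fst).add (contDiff_snd.pow 2)).contDiffOn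
    · intro p hp
      have hp' : ¬(p.1 = 0 ∧ p.2 = 0) := by
        intro hc
        exact hp (Prod.ext hc.1 hc.2)
      rcases not_and_or.mp hp' with h | h
      · have : (0 : ℝ) < ‖p.1‖ ^ 2 + p.2 ^ 2 :=
          add_pos_of_pos_of_nonneg (pow_pos (norm_pos_iff.mpr h) 2) (sq_nonneg _)
        exact ne_of_gt this
      · have h2 : (0 : ℝ) < p.2 ^ 2 := (sq_nonneg p.2).lt_of_ne (Ne.symm (pow_ne_zero 2 h))
        exact ne_of_gt (add_pos_of_nonneg_of_pos (sq_nonneg _) h2)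
  -- bound on the unit sphere by compactness
  have hcont : ContinuousOn (iteratedFDerivWithin ℝ n Fh U) U :=
    hFsm.continuousOn_iteratedFDerivWithin le_top hUo.uniqueDiffOn
  have hSsub : Metric.sphere (0 : Eu d × ℝ) 1 ⊆ U := by
    intro w hw
    have : ‖w‖ = 1 := mem_sphere_zero_iff_norm.mp hw
    intro hc
    rw [hc] at this
    simp at this
  obtain ⟨C₀, hC₀⟩ := (isCompact_sphere (0 : Eu d × ℝ) 1).exists_bound_of_continuousOn
    (hcont.mono hSsub)
  refine ⟨max C₀ 0 + 1, by positivity, fun ξ hξ => ?_⟩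
  -- the slice map
  set a : Eu d × ℝ := ((0 : Eu d), (1 : ℝ)) with ha
  set G : (Eu d × ℝ) → ℝ := fun p => Fh (p + a) with hG
  set A : Eu d →L[ℝ] (Eu d × ℝ) := ContinuousLinearMap.inl ℝ (Eu d) ℝ with hA
  set V : Set (Eu d × ℝ) := (fun p => p + a) ⁻¹' U with hVdef
  have hVo : IsOpen V := hUo.preimage (continuous_id.add continuous_const)
  have hGsm : ContDiffOn ℝ (⊤ : WithTop ℕ∞) G V := by
    have htr : ContDiff ℝ (⊤ : WithTop ℕ∞) (fun p : Eu d × ℝ => p + a) :=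
      contDiff_id.add contDiff_const
    have := hFsm.comp htr.contDiffOn (Set.mapsTo_preimage _ _)
    simpa [Function.comp_def] using this
  have hAV : A ⁻¹' V = Set.univ := by
    ext x
    simp only [Set.mem_preimage, Set.mem_univ, iff_true, hVdef, hUdef, Set.mem_setOf_eq, hA, ha]
    intro hc
    have := congrArg Prod.snd hc
    simp at this
  have hmG : (fun ξ : Eu d => -2 * ξ i * ξ j / (1 + ‖ξ‖ ^ 2)) = G ∘ A := by
    funext x
    simp only [Function.comp_apply, hG, hA, hFh, ha, ContinuousLinearMap.inl_apply]
    norm_num [add_comm]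
  -- Step B : slice bound
  set z : Eu d × ℝ := (ξ, (1 : ℝ)) with hz
  have hzU : z ∈ U := by
    intro hc
    have := congrArg Prod.snd hc
    simp [hz] at this
  have hstepB : iteratedFDeriv ℝ n (fun ξ : Eu d => -2 * ξ i * ξ j / (1 + ‖ξ‖ ^ 2)) ξ =
      (iteratedFDerivWithin ℝ n Fh U z).compContinuousLinearMap (fun _ => A) := by
    have hAx : A ξ ∈ V := by
      simp only [hVdef, Set.mem_preimage]
      have : A ξ + a = z := by
        simp [hA, ha, hz, Prod.ext_iff]
      rw [this]; exact hzU
    have h1 := A.iteratedFDerivWithin_comp_right hGsm hVo.uniqueDiffOn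
      (hAV ▸ uniqueDiffOn_univ) hAx (le_top : (n : WithTop ℕ∞) ≤ ⊤)
    rw [hAV, iteratedFDerivWithin_univ] at h1
    have h2 : iteratedFDerivWithin ℝ n G V (A ξ) = iteratedFDeriv ℝ n G (A ξ) :=
      iteratedFDerivWithin_of_isOpen n hVo hAx
    have h3 : iteratedFDeriv ℝ n G (A ξ) = iteratedFDeriv ℝ n Fh (A ξ + a) :=
      iteratedFDeriv_comp_add_right'' n Fh a (A ξ)
    have h4 : A ξ + a = z := by simp [hA, ha, hz, Prod.ext_iff]
    have h5 : iteratedFDeriv ℝ n Fh z = iteratedFDerivWithin ℝ n Fh U z :=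
      (iteratedFDerivWithin_of_isOpen n hUo hzU).symm
    rw [hmG, h1, h2, h3, h4, h5]
  -- Step C : homogeneity
  set c : ℝ := ‖z‖ with hc
  have hc1 : (1 : ℝ) ≤ c := by
    rw [hc, hz, Prod.norm_def]
    simp
  have hcpos : (0 : ℝ) < c := lt_of_lt_of_le one_pos hc1
  have hξc : ‖ξ‖ ≤ c := by
    rw [hc, hz, Prod.norm_def]
    exact le_max_left _ _
  set gc : (Eu d × ℝ) →L[ℝ] (Eu d × ℝ) := c⁻¹ • ContinuousLinearMap.id ℝ (Eu d × ℝ) with hgc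
  have hgcapp : ∀ p : Eu d × ℝ, gc p = c⁻¹ • p := fun p => rfl
  have hFhg : Fh ∘ gc = Fh := by
    funext p
    have h1 : (c⁻¹ • p : Eu d × ℝ).1 = c⁻¹ • p.1 := rfl
    have h2 : (c⁻¹ • p : Eu d × ℝ).2 = c⁻¹ * p.2 := rfl
    simp only [Function.comp_apply, hgcapp, hFh, h1, h2, PiLp.smul_apply, smul_eq_mul]
    rw [norm_smul]
    rw [show ‖c⁻¹‖ = c⁻¹ from by rw [Real.norm_eq_abs, abs_of_pos (by positivity)]]
    rw [show (-2 * (c⁻¹ * p.1 i) * (c⁻¹ * p.1 j)) = (c⁻¹ ^ 2) * (-2 * p.1 i * p.1 j) from by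
        ring,
      show ((c⁻¹ * ‖p.1‖) ^ 2 + (c⁻¹ * p.2) ^ 2) = (c⁻¹ ^ 2) * (‖p.1‖ ^ 2 + p.2 ^ 2) from by
        ring]
    exact mul_div_mul_left _ _ (by positivity)
  have hgcU : gc ⁻¹' U = U := by
    ext p
    simp only [Set.mem_preimage, hUdef, Set.mem_setOf_eq, hgcapp]
    simp [smul_eq_zero, (by positivity : c⁻¹ ≠ 0)]
  set w : Eu d × ℝ := c⁻¹ • z with hw
  have hwnorm : ‖w‖ = 1 := by
    rw [hw, norm_smul, Real.norm_eq_abs, abs_of_pos (by positivity), ← hc]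
    field_simp
  have hwS : w ∈ Metric.sphere (0 : Eu d × ℝ) 1 := mem_sphere_zero_iff_norm.mpr hwnorm
  have hstepC : iteratedFDerivWithin ℝ n Fh U z =
      (iteratedFDerivWithin ℝ n Fh U w).compContinuousLinearMap (fun _ => gc) := by
    have h1 := gc.iteratedFDerivWithin_comp_right hFsm hUo.uniqueDiffOn
      (show UniqueDiffOn ℝ (⇑gc ⁻¹' U) from by rw [hgcU]; exact hUo.uniqueDiffOn)
      (show gc z ∈ U from by rw [hgcapp]; exact hSsub hwS)
      (le_top : (n : WithTop ℕ∞) ≤ ⊤)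
    rw [hFhg, hgcU] at h1
    rw [h1, hgcapp]
  -- norms
  have hgcnorm : ‖gc‖ ≤ c⁻¹ := by
    rw [hgc]
    calc ‖c⁻¹ • ContinuousLinearMap.id ℝ (Eu d × ℝ)‖
        ≤ ‖(c⁻¹ : ℝ)‖ * ‖ContinuousLinearMap.id ℝ (Eu d × ℝ)‖ :=
          ContinuousLinearMap.opNorm_smul_le _ _
      _ ≤ c⁻¹ * 1 := by
          rw [Real.norm_eq_abs, abs_of_pos (by positivity)]
          exact mul_le_mul_of_nonneg_left ContinuousLinearMap.norm_id_le (by positivity)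
      _ = c⁻¹ := mul_one _
  have hAnorm : ‖A‖ ≤ 1 := by
    refine ContinuousLinearMap.opNorm_le_bound A zero_le_one (fun x => ?_)
    rw [one_mul, hA]
    have : ‖((x, (0 : ℝ)) : Eu d × ℝ)‖ = ‖x‖ := by
      rw [Prod.norm_def]; simp
    simpa [ContinuousLinearMap.inl_apply] using le_of_eq this
  have hnormz : ‖iteratedFDerivWithin ℝ n Fh U z‖ ≤ (max C₀ 0) * c⁻¹ ^ n := by
    rw [hstepC]
    calc ‖(iteratedFDerivWithin ℝ n Fh U w).compContinuousLinearMap (fun _ => gc)‖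
        ≤ ‖iteratedFDerivWithin ℝ n Fh U w‖ * ∏ _k : Fin n, ‖gc‖ :=
          ContinuousMultilinearMap.norm_compContinuousLinearMap_le _ _
      _ ≤ (max C₀ 0) * c⁻¹ ^ n := by
          apply mul_le_mul
          · exact le_trans (hC₀ w hwS) (le_max_left _ _)
          · rw [Finset.prod_const, Finset.card_univ, Fintype.card_fin]
            exact pow_le_pow_left₀ (norm_nonneg _) hgcnorm n
          · exact Finset.prod_nonneg (fun _ _ => norm_nonneg _)
          · exact le_max_right _ _
  have hnormm : ‖iteratedFDeriv ℝ n (fun ξ : Eu d => -2 * ξ i * ξ j / (1 + ‖ξ‖ ^ 2)) ξ‖ ≤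
      ‖iteratedFDerivWithin ℝ n Fh U z‖ := by
    rw [hstepB]
    calc ‖(iteratedFDerivWithin ℝ n Fh U z).compContinuousLinearMap (fun _ => A)‖
        ≤ ‖iteratedFDerivWithin ℝ n Fh U z‖ * ∏ _k : Fin n, ‖A‖ :=
          ContinuousMultilinearMap.norm_compContinuousLinearMap_le _ _
      _ ≤ ‖iteratedFDerivWithin ℝ n Fh U z‖ * 1 := by
          apply mul_le_mul_of_nonneg_left _ (norm_nonneg _)
          rw [Finset.prod_const, Finset.card_univ, Fintype.card_fin]
          exact pow_le_one₀ (norm_nonneg _) hAnorm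
      _ = _ := mul_one _
  calc ‖ξ‖ ^ n * ‖iteratedFDeriv ℝ n (fun ξ : Eu d => -2 * ξ i * ξ j / (1 + ‖ξ‖ ^ 2)) ξ‖
      ≤ c ^ n * ((max C₀ 0) * c⁻¹ ^ n) := by
        apply mul_le_mul
        · exact pow_le_pow_left₀ (norm_nonneg _) hξc n
        · exact le_trans hnormm hnormz
        · exact norm_nonneg _
        · positivity
    _ = (max C₀ 0) * (c ^ n * c⁻¹ ^ n) := by ring
    _ = (max C₀ 0) := by
        rw [← mul_pow, mul_inv_cancel₀ (ne_of_gt hcpos), one_pow, mul_one]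
    _ ≤ max C₀ 0 + 1 := by linarith
end
end

section
/- Let d ≥ 1, 1 ≤ r < ∞ with conjugate exponent r', and fix a length scale 0 < L ≤ ∞ with associated norm ‖·‖_{W^{-1,r}}. Let φ ∈ 𝒮(ℝ^d;ℝ) be a Schwartz mollifier. Then there exists a constant C > 0, depending only on φ and the dimension d, such that for every f ∈ L^r(ℝ^d) and every δ > 0: ‖f‖_{W^{-1,r}} ≤ C (L ‖f*φ_δ‖_{L^r} + δ ‖f‖_{L^r}). -/
open MeasureTheory Filter
open scoped ENNReal FourierTransform SchwartzMap

noncomputable section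

/-- The negative Sobolev norm `W^{-1,r}` at length scale `L ∈ (0,∞]`; `r'` is the
conjugate exponent of `r`. It is the dual norm of `(1/L)‖φ‖_{L^{r'}} + ‖∇φ‖_{L^{r'}}`
over test functions. -/
def Wneg {d : ℕ} (L r' : ℝ≥0∞) (f : Eu d → ℝ) : ℝ≥0∞ :=
  ⨆ (φ : Eu d → ℝ) (_ : IsTest φ)
    (_ : L⁻¹ * eLpNorm φ r' volume +
          eLpNorm (fun x => gradient φ x) r' volume ≤ 1),
    ENNReal.ofReal (∫ x, f x * φ x)

namespace WnegAux
open scoped InnerProductSpace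

variable {d : ℕ}

/-- Hölder, part 1: integrability of the product. -/
lemma holder_int {r r' : ℝ≥0∞} (hc : 1/r + 1/r' = 1) {u v : Eu d → ℝ}
    (hu : MemLp u r volume) (hv : MemLp v r' volume) :
    Integrable (fun x => u x * v x) volume := by
  have key : eLpNorm (fun x => u x * v x) 1 volume ≤
      eLpNorm u r volume * eLpNorm v r' volume := by
    refine le_of_le_of_eq (eLpNorm_le_eLpNorm_mul_eLpNorm_of_nnnorm (r := 1) hu.1 hv.1 (· * ·) 1 ?_
      (hpqr := ⟨by simpa [one_div] using hc⟩)) (by rw [ENNReal.coe_one, one_mul])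
    · exact Eventually.of_forall fun x => by simp [nnnorm_mul]
  refine memLp_one_iff_integrable.mp ⟨hu.1.mul hv.1, ?_⟩
  exact lt_of_le_of_lt key (ENNReal.mul_lt_top hu.2 hv.2)

/-- Hölder, part 2: bound on the integral of the absolute value. -/
lemma holder_abs {r r' : ℝ≥0∞} (hc : 1/r + 1/r' = 1) {u v : Eu d → ℝ}
    (hu : MemLp u r volume) (hv : MemLp v r' volume) :
    ∫ x, |u x * v x| ≤ (eLpNorm u r volume).toReal * (eLpNorm v r' volume).toReal := by
  have key : eLpNorm (fun x => u x * v x) 1 volume ≤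
      eLpNorm u r volume * eLpNorm v r' volume := by
    refine le_of_le_of_eq (eLpNorm_le_eLpNorm_mul_eLpNorm_of_nnnorm (r := 1) hu.1 hv.1 (· * ·) 1 ?_
      (hpqr := ⟨by simpa [one_div] using hc⟩)) (by rw [ENNReal.coe_one, one_mul])
    · exact Eventually.of_forall fun x => by simp [nnnorm_mul]
  have h1 : ∫ x, |u x * v x| = (eLpNorm (fun x => u x * v x) 1 volume).toReal := by
    rw [eLpNorm_one_eq_lintegral_enorm]
    rw [← integral_norm_eq_lintegral_enorm (f := fun x => u x * v x) (hu.1.mul hv.1)]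
    simp only [Real.norm_eq_abs]
  rw [h1, ← ENNReal.toReal_mul]
  exact ENNReal.toReal_mono (ENNReal.mul_lt_top hu.2 hv.2).ne key

/-- Hölder, part 3: bound on the absolute value of the integral. -/
lemma holder_abs' {r r' : ℝ≥0∞} (hc : 1/r + 1/r' = 1) {u v : Eu d → ℝ}
    (hu : MemLp u r volume) (hv : MemLp v r' volume) :
    |∫ x, u x * v x| ≤ (eLpNorm u r volume).toReal * (eLpNorm v r' volume).toReal := by
  refine le_trans ?_ (holder_abs hc hu hv)
  simpa only [Real.norm_eq_abs] using
    norm_integral_le_integral_norm (μ := (volume : Measure (Eu d))) (fun x => u x * v x)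

lemma isTest_memℒp {ψ : Eu d → ℝ} (hψ : IsTest ψ) (p : ℝ≥0∞) : MemLp ψ p volume :=
  hψ.1.continuous.memLp_of_hasCompactSupport hψ.2

lemma isTest_eLpNorm_ne_top {ψ : Eu d → ℝ} (hψ : IsTest ψ) (p : ℝ≥0∞) :
    eLpNorm ψ p volume ≠ ∞ := (isTest_memℒp hψ p).2.ne

/-- translation of a test function -/
lemma isTest_translate {ψ : Eu d → ℝ} (hψ : IsTest ψ) (z : Eu d) :
    IsTest (fun y => ψ (y + z)) := by
  constructor
  · exact hψ.1.comp ((contDiff_id).add contDiff_const)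
  · exact hψ.2.comp_homeomorph (Homeomorph.addRight z)

lemma eLpNorm_translate (h : Eu d → ℝ) (z : Eu d) (hm : AEStronglyMeasurable h volume)
    (p : ℝ≥0∞) : eLpNorm (fun y => h (y + z)) p volume = eLpNorm h p volume :=
  eLpNorm_comp_measurePreserving hm (measurePreserving_add_right volume z)

lemma memℒp_translate {h : Eu d → ℝ} {p : ℝ≥0∞} (hh : MemLp h p volume) (z : Eu d) :
    MemLp (fun y => h (y + z)) p volume :=
  hh.comp_measurePreserving (measurePreserving_add_right volume z)


variable {d : ℕ}

lemma gradient_continuous {ψ : Eu d → ℝ} (hψ : IsTest ψ) :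
    Continuous (fun x => gradient ψ x) :=
  (InnerProductSpace.toDual ℝ (Eu d)).symm.continuous.comp
    (hψ.1.continuous_fderiv (by simp))

lemma gradient_compactSupport {ψ : Eu d → ℝ} (hψ : IsTest ψ) :
    HasCompactSupport (fun x => gradient ψ x) := by
  have h := hψ.2.fderiv (𝕜 := ℝ)
  exact h.comp_left (g := (InnerProductSpace.toDual ℝ (Eu d)).symm) (by simp)

lemma gradient_memℒp {ψ : Eu d → ℝ} (hψ : IsTest ψ) (p : ℝ≥0∞) :
    MemLp (fun x => gradient ψ x) p volume :=
  (gradient_continuous hψ).memLp_of_hasCompactSupport (gradient_compactSupport hψ)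

lemma fderiv_apply_eq_inner (ψ : Eu d → ℝ) (x v : Eu d) :
    fderiv ℝ ψ x v = ⟪gradient ψ x, v⟫_ℝ := by
  rw [gradient, InnerProductSpace.toDual_symm_apply]

lemma abs_fderiv_apply_le (ψ : Eu d → ℝ) (x v : Eu d) :
    |fderiv ℝ ψ x v| ≤ ‖gradient ψ x‖ * ‖v‖ := by
  rw [fderiv_apply_eq_inner]
  exact abs_real_inner_le_norm _ _

lemma memℒp_fderiv_slice {ψ : Eu d → ℝ} (hψ : IsTest ψ) (p : ℝ≥0∞) (c z : Eu d) :
    MemLp (fun y => fderiv ℝ ψ (y + c) z) p volume := by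
  have hcont : Continuous (fun y : Eu d => fderiv ℝ ψ (y + c) z) :=
    ((hψ.1.continuous_fderiv (by simp)).comp (continuous_id.add continuous_const)).clm_apply
      continuous_const
  have hsupp : HasCompactSupport (fun y : Eu d => fderiv ℝ ψ (y + c) z) :=
    (hψ.2.fderiv_apply (𝕜 := ℝ) z).comp_homeomorph (Homeomorph.addRight c)
  exact hcont.memLp_of_hasCompactSupport hsupp

lemma eLpNorm_fderiv_slice {ψ : Eu d → ℝ} (hψ : IsTest ψ) (p : ℝ≥0∞) (c z : Eu d) :
    eLpNorm (fun y => fderiv ℝ ψ (y + c) z) p volume ≤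
      ‖z‖₊ * eLpNorm (fun x => gradient ψ x) p volume := by
  have h1 : eLpNorm (fun y => fderiv ℝ ψ (y + c) z) p volume ≤
      eLpNorm (fun y => ‖z‖ • gradient ψ (y + c)) p volume := by
    refine eLpNorm_mono fun y => ?_
    rw [Real.norm_eq_abs, norm_smul, Real.norm_eq_abs, abs_norm]
    calc |fderiv ℝ ψ (y + c) z| ≤ ‖gradient ψ (y + c)‖ * ‖z‖ := abs_fderiv_apply_le ψ _ z
      _ = ‖z‖ * ‖gradient ψ (y + c)‖ := mul_comm _ _
  refine h1.trans ?_
  rw [show (fun y : Eu d => ‖z‖ • gradient ψ (y + c)) =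
      (‖z‖ • fun y : Eu d => gradient ψ (y + c)) from rfl, eLpNorm_const_smul]
  have h2 : eLpNorm (fun y : Eu d => gradient ψ (y + c)) p volume =
      eLpNorm (fun x => gradient ψ x) p volume :=
    eLpNorm_comp_measurePreserving (gradient_continuous hψ).aestronglyMeasurable
      (measurePreserving_add_right volume c)
  rw [h2]
  simp; exact le_rfl

lemma ftc {ψ : Eu d → ℝ} (hψ : IsTest ψ) (y z : Eu d) :
    ψ (y + z) - ψ y = ∫ t in (0:ℝ)..1, fderiv ℝ ψ (y + t • z) z := by
  have hd : ∀ t ∈ Set.uIcc (0:ℝ) 1,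
      HasDerivAt (fun s : ℝ => ψ (y + s • z)) (fderiv ℝ ψ (y + t • z) z) t := by
    intro t _
    have hline : HasDerivAt (fun s : ℝ => y + s • z) z t := by
      simpa using ((hasDerivAt_id t).smul_const z).const_add y
    exact ((hψ.1.differentiable (by simp) (y + t • z)).hasFDerivAt).comp_hasDerivAt t hline
  have hcont : Continuous (fun t : ℝ => fderiv ℝ ψ (y + t • z) z) :=
    ((hψ.1.continuous_fderiv (by simp)).comp
      (continuous_const.add (continuous_id.smul continuous_const))).clm_apply continuous_const
  have := intervalIntegral.integral_eq_sub_of_hasDerivAt hd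
    (hcont.intervalIntegrable 0 1)
  rw [this]
  simp


variable {d : ℕ}

lemma finrank_eu : Module.finrank ℝ (Eu d) = d := by simp [finrank_euclideanSpace]

lemma moll_continuous (φ : 𝓢(Eu d, ℝ)) (δ : ℝ) : Continuous (moll (⇑φ) δ) :=
  continuous_const.mul (φ.continuous.comp (continuous_const_smul _))

lemma moll_integrable (φ : 𝓢(Eu d, ℝ)) {δ : ℝ} (hδ : 0 < δ) :
    Integrable (moll (⇑φ) δ) volume :=
  ((φ.integrable (μ := volume)).comp_smul (inv_ne_zero hδ.ne')).const_mul _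

lemma moll_integral (φ : 𝓢(Eu d, ℝ)) {δ : ℝ} (hδ : 0 < δ) :
    ∫ x, moll (⇑φ) δ x = ∫ x, φ x := by
  have hpow : (0:ℝ) < δ ^ d := pow_pos hδ d
  simp only [moll]
  rw [integral_const_mul, Measure.integral_comp_inv_smul volume (fun x => φ x) δ, finrank_eu,
    abs_of_pos hpow, smul_eq_mul, ← mul_assoc, inv_mul_cancel₀ hpow.ne', one_mul]

lemma moll_mom_pointwise (φ : 𝓢(Eu d, ℝ)) {δ : ℝ} (hδ : 0 < δ) (z : Eu d) :
    |moll (⇑φ) δ z| * ‖z‖ = (δ ^ d)⁻¹ * (|φ (δ⁻¹ • z)| * ‖δ • δ⁻¹ • z‖) := by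
  have hpow : (0:ℝ) < δ ^ d := pow_pos hδ d
  rw [smul_inv_smul₀ hδ.ne']
  simp only [moll, abs_mul, abs_of_pos (inv_pos.mpr hpow)]
  ring

lemma moll_first_moment_int (φ : 𝓢(Eu d, ℝ)) {δ : ℝ} (hδ : 0 < δ) :
    Integrable (fun z => |moll (⇑φ) δ z| * ‖z‖) volume := by
  have hv : Integrable (fun w : Eu d => |φ w| * ‖δ • w‖) volume := by
    have h := (φ.integrable_pow_mul (μ := volume) 1).const_mul |δ|
    refine h.congr (Eventually.of_forall fun w => ?_)
    simp only [norm_smul, Real.norm_eq_abs, pow_one]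
    ring
  have := (hv.comp_smul (inv_ne_zero hδ.ne')).const_mul ((δ ^ d)⁻¹ : ℝ)
  refine this.congr (Eventually.of_forall fun z => ?_)
  simpa using (moll_mom_pointwise φ hδ z).symm

lemma moll_first_moment_eq (φ : 𝓢(Eu d, ℝ)) {δ : ℝ} (hδ : 0 < δ) :
    ∫ z, |moll (⇑φ) δ z| * ‖z‖ = δ * ∫ w, ‖w‖ * |φ w| := by
  have hpow : (0:ℝ) < δ ^ d := pow_pos hδ d
  calc ∫ z, |moll (⇑φ) δ z| * ‖z‖
      = ∫ z, (δ ^ d)⁻¹ * ((fun w => |φ w| * ‖δ • w‖) (δ⁻¹ • z)) := by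
        exact integral_congr_ae (Eventually.of_forall fun z => moll_mom_pointwise φ hδ z)
    _ = (δ ^ d)⁻¹ * ∫ z, (fun w => |φ w| * ‖δ • w‖) (δ⁻¹ • z) := integral_const_mul _ _
    _ = (δ ^ d)⁻¹ * (δ ^ d * ∫ w, |φ w| * ‖δ • w‖) := by
        rw [Measure.integral_comp_inv_smul volume (fun w => |φ w| * ‖δ • w‖) δ, finrank_eu,
          abs_of_pos hpow, smul_eq_mul]
    _ = ∫ w, |φ w| * ‖δ • w‖ := by rw [← mul_assoc, inv_mul_cancel₀ hpow.ne', one_mul]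
    _ = δ * ∫ w, ‖w‖ * |φ w| := by
        rw [← integral_const_mul]
        refine integral_congr_ae (Eventually.of_forall fun w => ?_)
        simp only [norm_smul, Real.norm_eq_abs, abs_of_pos hδ]
        ring


section Core
variable {r r' : ℝ≥0∞} {f g ψ : Eu d → ℝ}

lemma cnv_aesm (hf : AEStronglyMeasurable f volume) (hg_cont : Continuous g) :
    AEStronglyMeasurable (cnv f g) volume := by
  have hm : AEStronglyMeasurable (fun p : Eu d × Eu d => f p.2 * g (p.1 - p.2))
      (volume.prod volume) :=
    hf.comp_snd.mul ((hg_cont.comp (continuous_fst.sub continuous_snd)).aestronglyMeasurable)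
  exact hm.integral_prod_right'

/-- The product-integrand `P (z, y) = f y * (g z * ψ (y + z))`. -/
private def PP (f g ψ : Eu d → ℝ) : Eu d × Eu d → ℝ :=
  fun p => f p.2 * (g p.1 * ψ (p.2 + p.1))

lemma PP_meas (hf : AEStronglyMeasurable f volume) (hg_cont : Continuous g)
    (hψ : IsTest ψ) : AEStronglyMeasurable (PP f g ψ) (volume.prod volume) :=
  hf.comp_snd.mul ((hg_cont.comp continuous_fst).aestronglyMeasurable.mul
    ((hψ.1.continuous.comp (continuous_snd.add continuous_fst)).aestronglyMeasurable))

lemma PP_int (hc : 1/r + 1/r' = 1) (hf : MemLp f r volume) (hg_cont : Continuous g)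
    (hg_int : Integrable g volume) (hψ : IsTest ψ) :
    Integrable (PP f g ψ) (volume.prod volume) := by
  have hmeas := PP_meas hf.1 hg_cont hψ
  rw [integrable_prod_iff hmeas]
  set c := (eLpNorm f r volume).toReal * (eLpNorm ψ r' volume).toReal with hc_def
  have hsec : ∀ z : Eu d, Integrable (fun y => PP f g ψ (z, y)) volume := by
    intro z
    have h1 := (holder_int hc hf (isTest_memℒp (isTest_translate hψ z) r')).const_mul (g z)
    refine h1.congr (Eventually.of_forall fun y => ?_)
    simp only [PP]; ring
  have hbound : ∀ z : Eu d, ∫ y, ‖PP f g ψ (z, y)‖ ≤ |g z| * c := by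
    intro z
    have h1 : ∀ y : Eu d, ‖PP f g ψ (z, y)‖ = |g z| * |f y * ψ (y + z)| := by
      intro y; simp only [PP, Real.norm_eq_abs, abs_mul]; ring
    calc ∫ y, ‖PP f g ψ (z, y)‖ = ∫ y, |g z| * |f y * ψ (y + z)| := by
          exact integral_congr_ae (Eventually.of_forall h1)
      _ = |g z| * ∫ y, |f y * ψ (y + z)| := integral_const_mul _ _
      _ ≤ |g z| * c := by
          refine mul_le_mul_of_nonneg_left ?_ (abs_nonneg _)
          have h2 := holder_abs hc hf (isTest_memℒp (isTest_translate hψ z) r')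
          rwa [eLpNorm_translate ψ z hψ.1.continuous.aestronglyMeasurable r'] at h2
  refine ⟨Eventually.of_forall hsec, ?_⟩
  refine Integrable.mono' ((hg_int.abs.mul_const c))
    (hmeas.norm.integral_prod_right') (Eventually.of_forall fun z => ?_)
  rw [Real.norm_eq_abs, abs_of_nonneg (integral_nonneg fun y => norm_nonneg _)]
  exact hbound z

/-- First part of the splitting identity. -/
lemma intTψ_eq_cnv (hc : 1/r + 1/r' = 1) (hf : MemLp f r volume)
    (hg_cont : Continuous g) (hg_int : Integrable g volume) (hψ : IsTest ψ) :
    ∫ y, ∫ z, PP f g ψ (z, y) = ∫ x, cnv f g x * ψ x := by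
  have hP := PP_int hc hf hg_cont hg_int hψ
  -- change variables in the inner integral
  have S1 : ∀ y : Eu d, ∫ z, PP f g ψ (z, y) = ∫ x, f y * (g (x - y) * ψ x) := by
    intro y
    have := (integral_sub_right_eq_self (μ := (volume : Measure (Eu d)))
      (fun z => f y * (g z * ψ (y + z))) y).symm
    simp only [PP]
    rw [this]
    exact integral_congr_ae (Eventually.of_forall fun x => by
      simp only [show y + (x - y) = x from by abel])
  -- integrability of the sheared integrand
  have hT : MeasurePreserving (fun p : Eu d × Eu d => (p.2 - p.1, p.1))
      ((volume : Measure (Eu d)).prod volume) (volume.prod volume) := by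
    have h1 := (measurePreserving_sub_prod (volume : Measure (Eu d)) volume)
    have h2 := (Measure.measurePreserving_swap (μ := (volume : Measure (Eu d))) (ν := (volume : Measure (Eu d))))
    exact h1.comp h2
  have hQ : Integrable (Function.uncurry fun y x => f y * (g (x - y) * ψ x))
      ((volume : Measure (Eu d)).prod volume) := by
    have := (hT.integrable_comp (PP_meas hf.1 hg_cont hψ)).mpr hP
    refine this.congr (Eventually.of_forall fun p => ?_)
    simp only [Function.comp, PP, Function.uncurry]
    simp only [show ∀ a b : Eu d, a + (b - a) = b from fun a b => by abel]
  calc ∫ y, ∫ z, PP f g ψ (z, y)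
      = ∫ y, ∫ x, f y * (g (x - y) * ψ x) := by
        exact integral_congr_ae (Eventually.of_forall fun y => S1 y)
    _ = ∫ x, ∫ y, f y * (g (x - y) * ψ x) := integral_integral_swap hQ
    _ = ∫ x, cnv f g x * ψ x := by
        refine integral_congr_ae (Eventually.of_forall fun x => ?_)
        show ∫ y, f y * (g (x - y) * ψ x) = cnv f g x * ψ x
        simp only [cnv]
        rw [← integral_mul_const]
        exact integral_congr_ae (Eventually.of_forall fun y => by ring)

/-- Second part of the splitting identity. -/
lemma int_sub_Tψ (hc : 1/r + 1/r' = 1) (hf : MemLp f r volume)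
    (hg_cont : Continuous g) (hg_int : Integrable g volume) (hg_one : ∫ z, g z = 1)
    (hψ : IsTest ψ) :
    ∫ y, (f y * ψ y - ∫ z, PP f g ψ (z, y)) =
      ∫ z, g z * (∫ y, f y * (ψ y - ψ (y + z))) := by
  have hP := PP_int hc hf hg_cont hg_int hψ
  have hfψ := holder_int hc hf (isTest_memℒp hψ r')
  have hF2 : Integrable (Function.uncurry fun z y => (f y * ψ y) * g z)
      ((volume : Measure (Eu d)).prod volume) := by
    have := hg_int.mul_prod hfψ
    refine this.congr (Eventually.of_forall fun p => ?_)
    simp only [Function.uncurry]; ring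
  have hW : Integrable (Function.uncurry fun z y => (f y * ψ y) * g z - PP f g ψ (z, y))
      ((volume : Measure (Eu d)).prod volume) := by
    refine hF2.sub (hP.congr (Eventually.of_forall fun p => ?_))
    simp only [Function.uncurry]
  have B1 : ∀ᵐ y : Eu d, f y * ψ y - ∫ z, PP f g ψ (z, y) =
      ∫ z, ((f y * ψ y) * g z - PP f g ψ (z, y)) := by
    filter_upwards [hP.prod_left_ae] with y hy
    have h0 : ∫ z, (f y * ψ y) * g z = f y * ψ y := by
      rw [integral_const_mul, hg_one, mul_one]
    rw [integral_sub (hg_int.const_mul _) hy, h0]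
  calc ∫ y, (f y * ψ y - ∫ z, PP f g ψ (z, y))
      = ∫ y, ∫ z, ((f y * ψ y) * g z - PP f g ψ (z, y)) := integral_congr_ae B1
    _ = ∫ z, ∫ y, ((f y * ψ y) * g z - PP f g ψ (z, y)) :=
        (integral_integral_swap hW).symm
    _ = ∫ z, g z * (∫ y, f y * (ψ y - ψ (y + z))) := by
        refine integral_congr_ae (Eventually.of_forall fun z => ?_)
        show (∫ y, ((f y * ψ y) * g z - PP f g ψ (z, y))) =
          g z * ∫ y, f y * (ψ y - ψ (y + z))
        rw [← integral_const_mul]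
        refine integral_congr_ae (Eventually.of_forall fun y => ?_)
        simp only [PP]; ring

/-- The splitting identity. -/
lemma split_identity (hc : 1/r + 1/r' = 1) (hf : MemLp f r volume)
    (hg_cont : Continuous g) (hg_int : Integrable g volume) (hg_one : ∫ z, g z = 1)
    (hψ : IsTest ψ) :
    ∫ y, f y * ψ y = (∫ x, cnv f g x * ψ x) +
      ∫ z, g z * (∫ y, f y * (ψ y - ψ (y + z))) := by
  have hP := PP_int hc hf hg_cont hg_int hψ
  have hfψ := holder_int hc hf (isTest_memℒp hψ r')
  have hfT : Integrable (fun y => ∫ z, PP f g ψ (z, y)) volume := by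
    have := hP.swap.integral_prod_left
    exact this
  have e1 : ∫ y, f y * ψ y =
      ∫ y, ((∫ z, PP f g ψ (z, y)) + (f y * ψ y - ∫ z, PP f g ψ (z, y))) := by
    refine integral_congr_ae (Eventually.of_forall fun y => ?_)
    ring
  have hsub : Integrable (fun y => f y * ψ y - ∫ z, PP f g ψ (z, y)) volume :=
    hfψ.sub hfT
  rw [e1, integral_add hfT hsub, intTψ_eq_cnv hc hf hg_cont hg_int hψ,
    int_sub_Tψ hc hf hg_cont hg_int hg_one hψ]

/-- Quantitative bound on `∫ f (ψ - ψ(·+z))`. -/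
lemma I_bound (hc : 1/r + 1/r' = 1) (hf : MemLp f r volume) (hψ : IsTest ψ) (z : Eu d) :
    |∫ y, f y * (ψ y - ψ (y + z))| ≤
      ((eLpNorm f r volume).toReal *
        (eLpNorm (fun x => gradient ψ x) r' volume).toReal) * ‖z‖ := by
  set Mf := (eLpNorm f r volume).toReal *
    (eLpNorm (fun x => gradient ψ x) r' volume).toReal with hMf
  have slice_toReal : ∀ t : ℝ,
      (eLpNorm (fun y => fderiv ℝ ψ (y + t • z) z) r' volume).toReal ≤
        ‖z‖ * (eLpNorm (fun x => gradient ψ x) r' volume).toReal := by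
    intro t
    have h2 := eLpNorm_fderiv_slice hψ r' (t • z) z
    have hfin : (‖z‖₊ : ℝ≥0∞) * eLpNorm (fun x => gradient ψ x) r' volume ≠ ∞ :=
      ENNReal.mul_ne_top ENNReal.coe_ne_top (gradient_memℒp hψ r').2.ne
    have := ENNReal.toReal_mono hfin h2
    rwa [ENNReal.toReal_mul, ENNReal.coe_toReal, coe_nnnorm] at this
  have hinner : ∀ t : ℝ, |∫ y, f y * fderiv ℝ ψ (y + t • z) z| ≤ Mf * ‖z‖ := by
    intro t
    have h1 := holder_abs' hc hf (memℒp_fderiv_slice hψ r' (t • z) z)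
    refine h1.trans ?_
    calc (eLpNorm f r volume).toReal *
          (eLpNorm (fun y => fderiv ℝ ψ (y + t • z) z) r' volume).toReal
        ≤ (eLpNorm f r volume).toReal *
          (‖z‖ * (eLpNorm (fun x => gradient ψ x) r' volume).toReal) :=
          mul_le_mul_of_nonneg_left (slice_toReal t) ENNReal.toReal_nonneg
      _ = Mf * ‖z‖ := by rw [hMf]; ring
  -- Fubini on `Ioc 0 1 × ℝ^d`
  set μ1 := (volume : Measure ℝ).restrict (Set.Ioc (0:ℝ) 1) with hμ1
  have hGmeas : AEStronglyMeasurable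
      (Function.uncurry fun (t : ℝ) (y : Eu d) => f y * fderiv ℝ ψ (y + t • z) z)
      (μ1.prod volume) := by
    refine AEStronglyMeasurable.mul ?_ ?_
    · exact hf.1.comp_snd
    · have : Continuous (fun q : ℝ × Eu d => fderiv ℝ ψ (q.2 + q.1 • z) z) :=
        ((hψ.1.continuous_fderiv (by simp)).comp
          (continuous_snd.add (continuous_fst.smul continuous_const))).clm_apply
          continuous_const
      exact this.aestronglyMeasurable
  have hG : Integrable
      (Function.uncurry fun (t : ℝ) (y : Eu d) => f y * fderiv ℝ ψ (y + t • z) z)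
      (μ1.prod volume) := by
    rw [integrable_prod_iff hGmeas]
    constructor
    · refine Eventually.of_forall fun t => ?_
      exact holder_int hc hf (memℒp_fderiv_slice hψ r' (t • z) z)
    · have hconst : Integrable (fun _ : ℝ => Mf * ‖z‖) μ1 := by
        rw [hμ1]
        exact integrableOn_const measure_Ioc_lt_top.ne
      refine Integrable.mono' hconst (hGmeas.norm.integral_prod_right')
        (Eventually.of_forall fun t => ?_)
      rw [Real.norm_eq_abs, abs_of_nonneg (integral_nonneg fun y => norm_nonneg _)]
      have h1 := holder_abs hc hf (memℒp_fderiv_slice hψ r' (t • z) z)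
      have heq : (∫ y : Eu d, ‖Function.uncurry
          (fun (t : ℝ) (y : Eu d) => f y * fderiv ℝ ψ (y + t • z) z) (t, y)‖) =
          ∫ y : Eu d, |f y * fderiv ℝ ψ (y + t • z) z| := by
        simp only [Function.uncurry, Real.norm_eq_abs]
      rw [heq]
      refine h1.trans ?_
      calc (eLpNorm f r volume).toReal *
            (eLpNorm (fun y => fderiv ℝ ψ (y + t • z) z) r' volume).toReal
          ≤ (eLpNorm f r volume).toReal *
            (‖z‖ * (eLpNorm (fun x => gradient ψ x) r' volume).toReal) :=
            mul_le_mul_of_nonneg_left (slice_toReal t) ENNReal.toReal_nonneg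
        _ = Mf * ‖z‖ := by rw [hMf]; ring
  have key : ∫ y, f y * (ψ y - ψ (y + z)) =
      - ∫ t, (∫ y, f y * fderiv ℝ ψ (y + t • z) z) ∂μ1 := by
    calc ∫ y, f y * (ψ y - ψ (y + z))
        = ∫ y, - (f y * (ψ (y + z) - ψ y)) := by
          refine integral_congr_ae (Eventually.of_forall fun y => ?_); ring
      _ = ∫ y, - ∫ t in (0:ℝ)..1, f y * fderiv ℝ ψ (y + t • z) z := by
          refine integral_congr_ae (Eventually.of_forall fun y => ?_)
          show -(f y * (ψ (y + z) - ψ y)) =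
            - ∫ t in (0:ℝ)..1, f y * fderiv ℝ ψ (y + t • z) z
          rw [ftc hψ y z, intervalIntegral.integral_const_mul]
      _ = - ∫ y, ∫ t in (0:ℝ)..1, f y * fderiv ℝ ψ (y + t • z) z := integral_neg _
      _ = - ∫ y, ∫ t, f y * fderiv ℝ ψ (y + t • z) z ∂μ1 := by
          rw [hμ1]
          refine congrArg Neg.neg (integral_congr_ae (Eventually.of_forall fun y => ?_))
          show (∫ t in (0:ℝ)..1, f y * fderiv ℝ ψ (y + t • z) z) =
            ∫ t in Set.Ioc (0:ℝ) 1, f y * fderiv ℝ ψ (y + t • z) z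
          exact intervalIntegral.integral_of_le zero_le_one
      _ = - ∫ t, (∫ y, f y * fderiv ℝ ψ (y + t • z) z) ∂μ1 := by
          rw [← integral_integral_swap hG]
  rw [key, abs_neg]
  have h2 : |∫ t, (∫ y, f y * fderiv ℝ ψ (y + t • z) z) ∂μ1| ≤
      ∫ t, Mf * ‖z‖ ∂μ1 := by
    refine le_trans ?_ (integral_mono_of_nonneg
      (Eventually.of_forall fun t => abs_nonneg _)
      (by rw [hμ1]; exact integrableOn_const measure_Ioc_lt_top.ne)
      (Eventually.of_forall fun t => hinner t))
    simpa only [Real.norm_eq_abs] using norm_integral_le_integral_norm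
      (μ := μ1) (fun t => ∫ y, f y * fderiv ℝ ψ (y + t • z) z)
  refine h2.trans ?_
  rw [integral_const, hμ1, measureReal_restrict_apply_univ]
  simp

/-- Bound on the second term of the splitting. -/
lemma T2_bound (hc : 1/r + 1/r' = 1) (hf : MemLp f r volume) (hψ : IsTest ψ)
    (hmom_int : Integrable (fun z => |g z| * ‖z‖) volume) :
    |∫ z, g z * (∫ y, f y * (ψ y - ψ (y + z)))| ≤
      ((eLpNorm f r volume).toReal *
        (eLpNorm (fun x => gradient ψ x) r' volume).toReal) *
        ∫ z, |g z| * ‖z‖ := by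
  set Mf := (eLpNorm f r volume).toReal *
    (eLpNorm (fun x => gradient ψ x) r' volume).toReal with hMf
  have hMf0 : 0 ≤ Mf := mul_nonneg ENNReal.toReal_nonneg ENNReal.toReal_nonneg
  have h1 : |∫ z, g z * (∫ y, f y * (ψ y - ψ (y + z)))| ≤
      ∫ z, |g z * (∫ y, f y * (ψ y - ψ (y + z)))| := by
    simpa only [Real.norm_eq_abs] using norm_integral_le_integral_norm
      (μ := (volume : Measure (Eu d)))
      (fun z => g z * (∫ y, f y * (ψ y - ψ (y + z))))
  refine h1.trans ?_
  have h2 : ∫ z, |g z * (∫ y, f y * (ψ y - ψ (y + z)))| ≤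
      ∫ z, Mf * (|g z| * ‖z‖) := by
    refine integral_mono_of_nonneg (Eventually.of_forall fun z => abs_nonneg _)
      (hmom_int.const_mul Mf) (Eventually.of_forall fun z => ?_)
    show |g z * ∫ y, f y * (ψ y - ψ (y + z))| ≤ Mf * (|g z| * ‖z‖)
    rw [abs_mul]
    calc |g z| * |∫ y, f y * (ψ y - ψ (y + z))| ≤ |g z| * (Mf * ‖z‖) :=
          mul_le_mul_of_nonneg_left (I_bound hc hf hψ z) (abs_nonneg _)
      _ = Mf * (|g z| * ‖z‖) := by ring
  refine h2.trans (le_of_eq ?_)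
  rw [integral_const_mul]

end Core

end WnegAux

/-- **Bound on the negative Sobolev norm by a mollification**
(from the proofs of Corollaries `cor:stability` and `cor:vanishingviscosity`):
`‖f‖_{W^{-1,r}} ≤ C (L ‖f*φ_δ‖_{L^r} + δ ‖f‖_{L^r})`. -/
theorem Wneg_le_mollification
    (d : ℕ) (hd : 1 ≤ d) (φ : 𝓢(Eu d, ℝ)) (hmol : ∫ x, φ x = 1) :
    ∃ C : ℝ, 0 < C ∧
      ∀ (r r' L : ℝ≥0∞), 1 ≤ r → r ≠ ∞ → 1 / r + 1 / r' = 1 → 0 < L →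
        ∀ f : Eu d → ℝ, MemLp f r volume →
          ∀ δ : ℝ, 0 < δ →
            Wneg L r' f ≤
              ENNReal.ofReal C *
                (L * eLpNorm (cnv f (moll (⇑φ) δ)) r volume +
                  ENNReal.ofReal δ * eLpNorm f r volume) := by
  classical
  have hM0 : 0 ≤ ∫ w : Eu d, ‖w‖ * |φ w| :=
    integral_nonneg fun w => mul_nonneg (norm_nonneg _) (abs_nonneg _)
  refine ⟨(∫ w : Eu d, ‖w‖ * |φ w|) + 1, by linarith, ?_⟩
  intro r r' L hr1 hrt hc hL f hf δ hδ
  set M : ℝ := ∫ w : Eu d, ‖w‖ * |φ w| with hMdef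
  set C : ℝ := M + 1 with hCdef
  have hC0 : 0 < C := by simp only [hCdef]; linarith
  have hMC : M ≤ C := by simp only [hCdef]; linarith
  by_cases hLA : L * eLpNorm (cnv f (moll (⇑φ) δ)) r volume = ∞
  · have h1 : ENNReal.ofReal C *
        (L * eLpNorm (cnv f (moll (⇑φ) δ)) r volume +
          ENNReal.ofReal δ * eLpNorm f r volume) = ∞ := by
      rw [hLA, top_add, ENNReal.mul_top (ENNReal.ofReal_pos.mpr hC0).ne']
    rw [h1]
    exact le_top
  have hA_ne : eLpNorm (cnv f (moll (⇑φ) δ)) r volume ≠ ∞ := by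
    intro h
    exact hLA (by rw [h, ENNReal.mul_top hL.ne'])
  have hg_cont := WnegAux.moll_continuous φ δ
  have hg_int := WnegAux.moll_integrable φ hδ
  have hg_one : ∫ z, moll (⇑φ) δ z = 1 := by rw [WnegAux.moll_integral φ hδ, hmol]
  have hmom_int := WnegAux.moll_first_moment_int φ hδ
  have hmom_eq := WnegAux.moll_first_moment_eq φ hδ
  have hcnv : MemLp (cnv f (moll (⇑φ) δ)) r volume :=
    ⟨WnegAux.cnv_aesm hf.1 hg_cont, lt_top_iff_ne_top.mpr hA_ne⟩
  have hBfin : eLpNorm f r volume ≠ ∞ := hf.2.ne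
  rw [Wneg]
  refine iSup_le fun ψ => iSup_le fun hψ => iSup_le fun hcon => ?_
  have hψfin := WnegAux.isTest_eLpNorm_ne_top hψ r'
  have hgrad_le : eLpNorm (fun x => gradient ψ x) r' volume ≤ 1 :=
    le_trans le_add_self hcon
  have hgradR : (eLpNorm (fun x => gradient ψ x) r' volume).toReal ≤ 1 := by
    have := ENNReal.toReal_mono ENNReal.one_ne_top hgrad_le
    simpa using this
  have hsplit := WnegAux.split_identity hc hf hg_cont hg_int hg_one hψ
  have hT1 := WnegAux.holder_abs' hc hcnv (WnegAux.isTest_memℒp hψ r')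
  have hT2 := WnegAux.T2_bound (g := moll (⇑φ) δ) hc hf hψ hmom_int
  rw [hmom_eq] at hT2
  -- the real-valued estimate
  have hreal : ∫ x, f x * ψ x ≤
      (eLpNorm (cnv f (moll (⇑φ) δ)) r volume).toReal * (eLpNorm ψ r' volume).toReal +
        M * δ * (eLpNorm f r volume).toReal := by
    have habs : ∫ x, f x * ψ x ≤
        |∫ x, cnv f (moll (⇑φ) δ) x * ψ x| +
          |∫ z, moll (⇑φ) δ z * (∫ y, f y * (ψ y - ψ (y + z)))| := by
      rw [hsplit]
      exact le_trans (le_abs_self _) (abs_add_le _ _)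
    refine habs.trans ?_
    have e3 : |∫ z, moll (⇑φ) δ z * (∫ y, f y * (ψ y - ψ (y + z)))| ≤
        M * δ * (eLpNorm f r volume).toReal := by
      refine hT2.trans ?_
      have h5 : (eLpNorm f r volume).toReal *
            (eLpNorm (fun x => gradient ψ x) r' volume).toReal * (δ * M) ≤
          (eLpNorm f r volume).toReal * 1 * (δ * M) := by
        have hδM : 0 ≤ δ * M := mul_nonneg hδ.le hM0
        refine mul_le_mul_of_nonneg_right ?_ hδM
        exact mul_le_mul_of_nonneg_left hgradR ENNReal.toReal_nonneg
      calc (eLpNorm f r volume).toReal *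
            (eLpNorm (fun x => gradient ψ x) r' volume).toReal * (δ * M)
          ≤ (eLpNorm f r volume).toReal * 1 * (δ * M) := h5
        _ = M * δ * (eLpNorm f r volume).toReal := by ring
    linarith [hT1, e3]
  -- pass to `ℝ≥0∞`
  have h3 : ENNReal.ofReal (∫ x, f x * ψ x) ≤
      eLpNorm (cnv f (moll (⇑φ) δ)) r volume * eLpNorm ψ r' volume +
        ENNReal.ofReal (M * δ) * eLpNorm f r volume := by
    refine le_trans (ENNReal.ofReal_le_ofReal hreal) ?_
    rw [ENNReal.ofReal_add (mul_nonneg ENNReal.toReal_nonneg ENNReal.toReal_nonneg)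
      (mul_nonneg (mul_nonneg hM0 hδ.le) ENNReal.toReal_nonneg)]
    refine add_le_add (le_of_eq ?_) (le_of_eq ?_)
    · rw [ENNReal.ofReal_mul ENNReal.toReal_nonneg, ENNReal.ofReal_toReal hA_ne,
        ENNReal.ofReal_toReal hψfin]
    · rw [ENNReal.ofReal_mul (mul_nonneg hM0 hδ.le), ENNReal.ofReal_toReal hBfin]
  refine h3.trans ?_
  have hC1 : (1 : ℝ≥0∞) ≤ ENNReal.ofReal C := ENNReal.one_le_ofReal.mpr (by linarith)
  have hfirst : eLpNorm (cnv f (moll (⇑φ) δ)) r volume * eLpNorm ψ r' volume ≤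
      ENNReal.ofReal C * (L * eLpNorm (cnv f (moll (⇑φ) δ)) r volume) := by
    rcases eq_or_ne (eLpNorm (cnv f (moll (⇑φ) δ)) r volume) 0 with h0 | h0
    · simp [h0]
    · have hLfin : L ≠ ∞ := by
        intro hLt
        exact hLA (by rw [hLt, ENNReal.top_mul h0])
      have hψL : eLpNorm ψ r' volume ≤ L := by
        have h4 : L⁻¹ * eLpNorm ψ r' volume ≤ 1 := le_trans (self_le_add_right _ _) hcon
        calc eLpNorm ψ r' volume = L * (L⁻¹ * eLpNorm ψ r' volume) := by
              rw [← mul_assoc, ENNReal.mul_inv_cancel hL.ne' hLfin, one_mul]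
          _ ≤ L * 1 := mul_le_mul_right h4 L
          _ = L := mul_one L
      calc eLpNorm (cnv f (moll (⇑φ) δ)) r volume * eLpNorm ψ r' volume
          ≤ eLpNorm (cnv f (moll (⇑φ) δ)) r volume * L := mul_le_mul_right hψL _
        _ = L * eLpNorm (cnv f (moll (⇑φ) δ)) r volume := mul_comm _ _
        _ ≤ ENNReal.ofReal C * (L * eLpNorm (cnv f (moll (⇑φ) δ)) r volume) :=
            le_mul_of_one_le_left (by positivity) hC1
  have hsecond : ENNReal.ofReal (M * δ) * eLpNorm f r volume ≤
      ENNReal.ofReal C * (ENNReal.ofReal δ * eLpNorm f r volume) := by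
    have hMCδ : ENNReal.ofReal (M * δ) ≤ ENNReal.ofReal C * ENNReal.ofReal δ := by
      rw [← ENNReal.ofReal_mul hC0.le]
      exact ENNReal.ofReal_le_ofReal (by nlinarith)
    calc ENNReal.ofReal (M * δ) * eLpNorm f r volume
        ≤ (ENNReal.ofReal C * ENNReal.ofReal δ) * eLpNorm f r volume :=
          mul_le_mul_left hMCδ _
      _ = ENNReal.ofReal C * (ENNReal.ofReal δ * eLpNorm f r volume) := mul_assoc _ _ _
  calc eLpNorm (cnv f (moll (⇑φ) δ)) r volume * eLpNorm ψ r' volume +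
        ENNReal.ofReal (M * δ) * eLpNorm f r volume
      ≤ ENNReal.ofReal C * (L * eLpNorm (cnv f (moll (⇑φ) δ)) r volume) +
        ENNReal.ofReal C * (ENNReal.ofReal δ * eLpNorm f r volume) :=
        add_le_add hfirst hsecond
    _ = ENNReal.ofReal C * (L * eLpNorm (cnv f (moll (⇑φ) δ)) r volume +
        ENNReal.ofReal δ * eLpNorm f r volume) := (mul_add _ _ _).symm
end
end
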